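/- Let $u$ be $C^1$ on a neighborhood of the circle of radius $\epsilon > 0$ centered at the origin in $\mathbb{R}^2$, and define on the disk $\mathbb{B}_\epsilon$ the function $v(r\cos\varphi, r\sin\varphi) := \frac{r}{\epsilon}\tilde u(\epsilon,\varphi)$ with $\tilde u(r,\varphi) = u(r\cos\varphi, r\sin\varphi)$. Then $\int_{\mathbb{B}_\epsilon} |\nabla v|^2\, dx\, dy \le 4\int_0^{2\pi} |\tilde u(\epsilon,\varphi)|^2\, d\varphi + 4\int_0^{2\pi} \left|\frac{\partial \tilde u}{\partial \varphi}(\epsilon,\varphi)\right|^2 d\varphi$. -/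

import Mathlib

/-!
Write `g φ = u (ε cos φ, ε sin φ)`. At the point `(r cos θ, r sin θ)` of the punctured disk the
differential `L` of `v = (r/ε) g` satisfies `L (cos θ, sin θ) = g θ / ε` (radial derivative) and
`L (-sin θ, cos θ) = g' θ / ε` (angular derivative divided by `r`). Since `|L(1,0)|² + |L(0,1)|²`
is invariant under rotating the frame, `|∇v|² = (|g θ|² + |g' θ|²) / ε²` there, a function of the
angle alone. In polar coordinates the disk integral of such a function is `ε²/2` times its
integral over a period, so the left-hand side equals `(∫ |g|² + ∫ |g'|²) / 2`.
-/

open MeasureTheory Real Set Filter Topology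

theorem sq_add_sq_polar (r θ : ℝ) : (r * cos θ) ^ 2 + (r * sin θ) ^ 2 = r ^ 2 := by
  linear_combination r ^ 2 * sin_sq_add_cos_sq θ

theorem polar_mem_disk_diff_zero {ε r : ℝ} (hr : r ∈ Ioo 0 ε) (θ : ℝ) :
    ((r * cos θ, r * sin θ) : ℝ × ℝ) ∈ {z : ℝ × ℝ | z.1 ^ 2 + z.2 ^ 2 < ε ^ 2} \ {0} := by
  obtain ⟨hr0, hrε⟩ := hr
  refine ⟨?_, fun h => ?_⟩
  · change (r * cos θ) ^ 2 + (r * sin θ) ^ 2 < ε ^ 2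
    rw [sq_add_sq_polar]
    gcongr
  · have h₁ : r * cos θ = 0 := congrArg Prod.fst h
    have h₂ : r * sin θ = 0 := congrArg Prod.snd h
    have := sq_add_sq_polar r θ
    rw [h₁, h₂] at this
    nlinarith

theorem norm_sq_add_norm_sq_apply_rotation {F : Type*} [NormedAddCommGroup F]
    [InnerProductSpace ℝ F] (L : ℝ × ℝ →L[ℝ] F) (θ : ℝ) :
    ‖L (cos θ, sin θ)‖ ^ 2 + ‖L (-sin θ, cos θ)‖ ^ 2 = ‖L (1, 0)‖ ^ 2 + ‖L (0, 1)‖ ^ 2 := by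
  have h₁ : ((cos θ, sin θ) : ℝ × ℝ) = cos θ • (1, 0) + sin θ • (0, 1) := by ext <;> simp
  have h₂ : ((-sin θ, cos θ) : ℝ × ℝ) = (-sin θ) • (1, 0) + cos θ • (0, 1) := by ext <;> simp
  rw [h₁, h₂]
  simp only [map_add, map_smul, norm_add_sq_real, norm_smul, mul_pow, Real.norm_eq_abs, sq_abs,
    real_inner_smul_left, real_inner_smul_right]
  linear_combination (‖L (1, 0)‖ ^ 2 + ‖L (0, 1)‖ ^ 2) * sin_sq_add_cos_sq θ

section PolarLines

variable {F : Type*} [NormedAddCommGroup F] [NormedSpace ℝ F] {v : ℝ × ℝ → F}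
  {L : ℝ × ℝ →L[ℝ] F} {r θ : ℝ}

theorem hasDerivAt_radial_of_hasFDerivAt (hv : HasFDerivAt v L (r * cos θ, r * sin θ)) :
    HasDerivAt (fun s => v (s * cos θ, s * sin θ)) (L (cos θ, sin θ)) r := by
  have hline : HasDerivAt (fun s : ℝ => ((s * cos θ, s * sin θ) : ℝ × ℝ)) (cos θ, sin θ) r := by
    simpa using ((hasDerivAt_id r).mul_const (cos θ)).prodMk ((hasDerivAt_id r).mul_const (sin θ))
  exact hv.comp_hasDerivAt r hline

theorem hasDerivAt_angular_of_hasFDerivAt (hv : HasFDerivAt v L (r * cos θ, r * sin θ)) :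
    HasDerivAt (fun φ => v (r * cos φ, r * sin φ)) (r • L (-sin θ, cos θ)) θ := by
  have hcircle : HasDerivAt (fun φ : ℝ => ((r * cos φ, r * sin φ) : ℝ × ℝ))
      (r • ((-sin θ, cos θ) : ℝ × ℝ)) θ := by
    simpa using ((hasDerivAt_cos θ).const_mul r).prodMk ((hasDerivAt_sin θ).const_mul r)
  rw [← map_smul]
  exact hv.comp_hasDerivAt θ hcircle

end PolarLines

theorem norm_sq_fderiv_radialExtension {F : Type*} [NormedAddCommGroup F]
    [InnerProductSpace ℝ F] {ε r θ : ℝ} (hr : r ∈ Ioo 0 ε) {g : ℝ → F} {v : ℝ × ℝ → F}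
    (hv : ∀ s ∈ Icc 0 ε, ∀ φ, v (s * cos φ, s * sin φ) = (s / ε) • g φ)
    (hvd : DifferentiableAt ℝ v (r * cos θ, r * sin θ)) (hg : DifferentiableAt ℝ g θ) :
    ‖fderiv ℝ v (r * cos θ, r * sin θ) (1, 0)‖ ^ 2 +
        ‖fderiv ℝ v (r * cos θ, r * sin θ) (0, 1)‖ ^ 2 =
      (‖g θ‖ ^ 2 + ‖deriv g θ‖ ^ 2) / ε ^ 2 := by
  obtain ⟨hr0, hrε⟩ := hr
  have hε : 0 < ε := hr0.trans hrε
  set L := fderiv ℝ v (r * cos θ, r * sin θ)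
  have hL : HasFDerivAt v L (r * cos θ, r * sin θ) := hvd.hasFDerivAt
  have hradial : L (cos θ, sin θ) = ε⁻¹ • g θ := by
    have heq : (fun s => v (s * cos θ, s * sin θ)) =ᶠ[𝓝 r] fun s => (s / ε) • g θ :=
      eventually_of_mem (Icc_mem_nhds hr0 hrε) fun s hs => hv s hs θ
    refine (hasDerivAt_radial_of_hasFDerivAt hL).unique (heq.hasDerivAt_iff.2 ?_)
    simpa using ((hasDerivAt_id r).div_const ε).smul_const (g θ)
  have hangular : r • L (-sin θ, cos θ) = r • ε⁻¹ • deriv g θ := by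
    have heq : (fun φ => v (r * cos φ, r * sin φ)) = fun φ => (r / ε) • g φ :=
      funext (hv r ⟨hr0.le, hrε.le⟩)
    rw [← mul_smul, ← div_eq_mul_inv]
    refine (hasDerivAt_angular_of_hasFDerivAt hL).unique ?_
    rw [heq]
    exact hg.hasDerivAt.const_smul (r / ε)
  rw [← norm_sq_add_norm_sq_apply_rotation, hradial, smul_right_injective F hr0.ne' hangular,
    norm_smul, norm_smul, norm_inv, Real.norm_of_nonneg hε.le]
  field_simp

theorem setIntegral_disk_eq_of_polar {ε : ℝ} (hε : 0 < ε) {f : ℝ × ℝ → ℝ} {h : ℝ → ℝ}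
    (hf : ∀ r ∈ Ioo 0 ε, ∀ θ, f (r * cos θ, r * sin θ) = h θ) :
    ∫ z in {z : ℝ × ℝ | z.1 ^ 2 + z.2 ^ 2 < ε ^ 2}, f z = ε ^ 2 / 2 * ∫ θ in 0..2 * π, h θ := by
  set D := {z : ℝ × ℝ | z.1 ^ 2 + z.2 ^ 2 < ε ^ 2}
  have hD : MeasurableSet D := measurableSet_lt (by fun_prop) measurable_const
  have hpolar : ∀ p ∈ polarCoord.target,
      p.1 • D.indicator f (polarCoord.symm p) = (Ioo 0 ε).indicator id p.1 * h p.2 := by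
    rintro ⟨r, θ⟩ ⟨hr : 0 < r, -⟩
    have hmem : ((r * cos θ, r * sin θ) : ℝ × ℝ) ∈ D ↔ r ∈ Ioo 0 ε := by
      change (r * cos θ) ^ 2 + (r * sin θ) ^ 2 < ε ^ 2 ↔ _
      rw [sq_add_sq_polar, sq_lt_sq₀ hr.le hε.le]
      exact ⟨fun h => ⟨hr, h⟩, And.right⟩
    simp only [polarCoord_symm_apply, smul_eq_mul]
    by_cases hrε : r ∈ Ioo 0 ε
    · rw [indicator_of_mem (hmem.2 hrε), indicator_of_mem hrε, hf r hrε θ, id]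
    · rw [indicator_of_notMem (mt hmem.1 hrε), indicator_of_notMem hrε, mul_zero, zero_mul]
  have hper : Function.Periodic h (2 * π) := fun θ => by
    have hmid : ε / 2 ∈ Ioo 0 ε := ⟨by positivity, by linarith⟩
    rw [← hf _ hmid θ, ← hf _ hmid (θ + 2 * π), cos_add_two_pi, sin_add_two_pi]
  have hradial : ∫ r in Ioi 0, (Ioo 0 ε).indicator id r = ε ^ 2 / 2 := by
    rw [setIntegral_indicator measurableSet_Ioo, inter_eq_self_of_subset_right Ioo_subset_Ioi_self,
      ← integral_Ioc_eq_integral_Ioo, ← intervalIntegral.integral_of_le hε.le]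
    simp
  have hangular : ∫ θ in Ioo (-π) π, h θ = ∫ θ in 0..2 * π, h θ := by
    rw [← integral_Ioc_eq_integral_Ioo, ← intervalIntegral.integral_of_le (by linarith [pi_pos])]
    simpa [show -π + 2 * π = π by ring] using hper.intervalIntegral_add_eq (-π) 0
  calc ∫ z in D, f z
      = ∫ p in polarCoord.target, p.1 • D.indicator f (polarCoord.symm p) := by
        rw [integral_comp_polarCoord_symm, integral_indicator hD]
    _ = ∫ p in Ioi 0 ×ˢ Ioo (-π) π, (Ioo 0 ε).indicator id p.1 * h p.2 :=
        setIntegral_congr_fun polarCoord.open_target.measurableSet hpolar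
    _ = (∫ r in Ioi 0, (Ioo 0 ε).indicator id r) * ∫ θ in Ioo (-π) π, h θ := by
        rw [Measure.volume_eq_prod]
        exact setIntegral_prod_mul _ _ _ _
    _ = ε ^ 2 / 2 * ∫ θ in 0..2 * π, h θ := by rw [hradial, hangular]

theorem stmt13_general (ε : ℝ) (hε : 0 < ε) (u v : ℝ × ℝ → ℂ)
    (U : Set (ℝ × ℝ))
    (hcirc : {z : ℝ × ℝ | z.1 ^ 2 + z.2 ^ 2 = ε ^ 2} ⊆ U)
    (hu : ContDiffOn ℝ 1 u U)
    (hv : ∀ r ∈ Set.Icc (0:ℝ) ε, ∀ φ : ℝ,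
      v (r * Real.cos φ, r * Real.sin φ) =
        ((r / ε : ℝ) : ℂ) * u (ε * Real.cos φ, ε * Real.sin φ))
    (hvdiff : DifferentiableOn ℝ v ({z : ℝ × ℝ | z.1 ^ 2 + z.2 ^ 2 < ε ^ 2} \ {0})) :
    (∫ z in {z : ℝ × ℝ | z.1 ^ 2 + z.2 ^ 2 < ε ^ 2},
        (‖fderiv ℝ v z (1, 0)‖ ^ 2 + ‖fderiv ℝ v z (0, 1)‖ ^ 2)) ≤
      4 * (∫ φ in (0:ℝ)..(2 * Real.pi), ‖u (ε * Real.cos φ, ε * Real.sin φ)‖ ^ 2) +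
        4 * ∫ φ in (0:ℝ)..(2 * Real.pi),
          ‖deriv (fun θ : ℝ => u (ε * Real.cos θ, ε * Real.sin θ)) φ‖ ^ 2 := by
  set g : ℝ → ℂ := fun θ => u (ε * cos θ, ε * sin θ)
  have hg : ContDiff ℝ 1 g :=
    hu.comp_contDiff (by fun_prop) fun θ => hcirc (sq_add_sq_polar ε θ)
  have hpunctured : IsOpen ({z : ℝ × ℝ | z.1 ^ 2 + z.2 ^ 2 < ε ^ 2} \ {0}) :=
    (isOpen_lt (by fun_prop) continuous_const).sdiff isClosed_singleton
  have hgrad := fun r (hr : r ∈ Ioo 0 ε) θ => norm_sq_fderiv_radialExtension hr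
    (fun s hs φ => by rw [hv s hs φ, Complex.real_smul])
    (hvdiff.differentiableAt (hpunctured.mem_nhds (polar_mem_disk_diff_zero hr θ)))
    (hg.differentiable one_ne_zero θ)
  have hint : ∀ f : ℝ → ℂ, Continuous f →
      IntervalIntegrable (fun θ => ‖f θ‖ ^ 2) volume 0 (2 * π) :=
    fun f hf => (hf.norm.pow 2).intervalIntegrable _ _
  have hnonneg : ∀ f : ℝ → ℂ, 0 ≤ ∫ θ in 0..2 * π, ‖f θ‖ ^ 2 := fun f =>
    intervalIntegral.integral_nonneg (by positivity) fun _ _ => by positivity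
  rw [setIntegral_disk_eq_of_polar hε hgrad, intervalIntegral.integral_div,
    intervalIntegral.integral_add (hint g hg.continuous) (hint _ (hg.continuous_deriv le_rfl))]
  field_simp
  linarith [hnonneg g, hnonneg (deriv g)]

/-- gradient estimate for the radial extension `J₁'`:
`∫_{B_ε} |∇v|² ≤ 4 ∫₀^{2π} |ũ(ε,φ)|² dφ + 4 ∫₀^{2π} |∂_φ ũ(ε,φ)|² dφ`. -/
theorem stmt13 (ε : ℝ) (hε : 0 < ε) (u v : ℝ × ℝ → ℂ)
    (U : Set (ℝ × ℝ)) (hU : IsOpen U)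
    (hcirc : {z : ℝ × ℝ | z.1 ^ 2 + z.2 ^ 2 = ε ^ 2} ⊆ U)
    (hu : ContDiffOn ℝ 1 u U)
    (hv : ∀ r ∈ Set.Icc (0:ℝ) ε, ∀ φ : ℝ,
      v (r * Real.cos φ, r * Real.sin φ) =
        ((r / ε : ℝ) : ℂ) * u (ε * Real.cos φ, ε * Real.sin φ))
    (hvdiff : DifferentiableOn ℝ v ({z : ℝ × ℝ | z.1 ^ 2 + z.2 ^ 2 < ε ^ 2} \ {0})) :
    (∫ z in {z : ℝ × ℝ | z.1 ^ 2 + z.2 ^ 2 < ε ^ 2},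
        (‖fderiv ℝ v z (1, 0)‖ ^ 2 + ‖fderiv ℝ v z (0, 1)‖ ^ 2)) ≤
      4 * (∫ φ in (0:ℝ)..(2 * Real.pi), ‖u (ε * Real.cos φ, ε * Real.sin φ)‖ ^ 2) +
        4 * ∫ φ in (0:ℝ)..(2 * Real.pi),
          ‖deriv (fun θ : ℝ => u (ε * Real.cos θ, ε * Real.sin θ)) φ‖ ^ 2 :=
  stmt13_general ε hε u v U hcirc hu hv hvdiff
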